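/- arXiv:2505.08640 — 4 statements merged into one kernel-verified Lean document; each statement's English description precedes it below -/
import Mathlib

section
/- Let d ≥ 1 and let U₁, U₂ ∈ M_d(ℂ) be unitary. Then there exist Hermitian matrices A₀, …, A_{d−1} ∈ M_d(ℂ), linearly independent over ℝ, such that U₁ A_k U₁ᴴ = U₂ A_k U₂ᴴ for every k. -/
open Module Matrix

local notation "⟪" x ", " y "⟫" => @inner ℂ _ _ x y

lemma eigenbasis_aux {d : ℕ} (T S : Module.End ℂ (EuclideanSpace ℂ (Fin d)))
    (hTT : ∀ x y, ⟪T x, T y⟫ = ⟪x, y⟫)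
    (hST : ∀ x, S (T x) = x) (hTS : ∀ x, T (S x) = x) :
    ∀ (n : ℕ) (V : Submodule ℂ (EuclideanSpace ℂ (Fin d))), finrank ℂ V = n →
      (∀ v ∈ V, T v ∈ V) →
      ∃ f : Fin n → EuclideanSpace ℂ (Fin d),
        Orthonormal ℂ f ∧ (∀ i, f i ∈ V) ∧ ∀ i, ∃ μ : ℂ, T (f i) = μ • f i := by
  intro n
  induction n with
  | zero =>
    intro V _ _
    refine ⟨finZeroElim, ?_, fun i => i.elim0, fun i => i.elim0⟩
    rw [orthonormal_iff_ite]
    exact fun i => i.elim0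
  | succ n ih =>
    intro V hV hVT
    haveI : FiniteDimensional ℂ V := inferInstance
    haveI : Nontrivial V := by
      apply Module.nontrivial_of_finrank_pos (R := ℂ)
      omega
    obtain ⟨μ, hμ⟩ := Module.End.exists_eigenvalue (T.restrict hVT)
    obtain ⟨v, hv⟩ := hμ.exists_hasEigenvector
    have hvV : (v : EuclideanSpace ℂ (Fin d)) ∈ V := v.2
    have hv0 : (v : EuclideanSpace ℂ (Fin d)) ≠ 0 := by
      simpa [Submodule.coe_eq_zero] using hv.2
    have hTv : T (v : EuclideanSpace ℂ (Fin d)) = μ • (v : EuclideanSpace ℂ (Fin d)) := by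
      have h2 := congrArg (Subtype.val) hv.apply_eq_smul
      simpa [LinearMap.restrict_apply] using h2
    set u : EuclideanSpace ℂ (Fin d) := (‖(v : EuclideanSpace ℂ (Fin d))‖ : ℂ)⁻¹ • v with hu_def
    have hu0 : u ≠ 0 := by
      simp only [hu_def, smul_ne_zero_iff]
      exact ⟨by simpa using hv0, hv0⟩
    have huV : u ∈ V := V.smul_mem _ hvV
    have hTu : T u = μ • u := by
      rw [hu_def, LinearMap.map_smul, hTv, smul_comm]
    have hμ0 : μ ≠ 0 := by
      intro h
      apply hu0
      have := hST u
      rw [hTu, h, zero_smul, map_zero] at this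
      exact this.symm
    have hSu : S u = μ⁻¹ • u := by
      have h1 : S (T u) = u := hST u
      rw [hTu, LinearMap.map_smul] at h1
      exact ((inv_smul_eq_iff₀ hμ0).mpr h1.symm).symm
    have hnu : ‖u‖ = 1 := by
      rw [hu_def, norm_smul]
      simp [norm_inv, norm_ne_zero_iff.mpr hv0]
    have hiu : ⟪u, u⟫ = 1 := by
      rw [@inner_self_eq_norm_sq_to_K ℂ, hnu]
      norm_num
    set V' : Submodule ℂ (EuclideanSpace ℂ (Fin d)) := (ℂ ∙ u)ᗮ ⊓ V with hV'
    have hspan_le : (ℂ ∙ u) ≤ V := by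
      rw [Submodule.span_singleton_le_iff_mem]; exact huV
    have hV'rank : finrank ℂ V' = n := by
      apply Submodule.finrank_add_inf_finrank_orthogonal' hspan_le
      rw [finrank_span_singleton hu0, hV]
      omega
    have hV'T : ∀ x ∈ V', T x ∈ V' := by
      intro x hx
      obtain ⟨hx1, hx2⟩ := Submodule.mem_inf.mp hx
      refine Submodule.mem_inf.mpr ⟨?_, hVT x hx2⟩
      rw [Submodule.mem_orthogonal_singleton_iff_inner_right] at hx1 ⊢
      calc ⟪u, T x⟫ = ⟪T (S u), T x⟫ := by rw [hTS]
        _ = ⟪S u, x⟫ := hTT _ _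
        _ = (starRingEnd ℂ) μ⁻¹ * ⟪u, x⟫ := by rw [hSu, inner_smul_left]
        _ = 0 := by rw [hx1, mul_zero]
    obtain ⟨f', hf'on, hf'V, hf'eig⟩ := ih V' hV'rank hV'T
    have hf'perp : ∀ i, f' i ∈ (ℂ ∙ u)ᗮ := fun i => (Submodule.mem_inf.mp (hf'V i)).1
    refine ⟨Fin.cons u f', ?_, ?_, ?_⟩
    · rw [orthonormal_iff_ite]
      intro i j
      refine Fin.cases ?_ ?_ i <;> [skip; intro i'] <;> refine Fin.cases ?_ ?_ j <;>
        try intro j'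
      · simpa only [Fin.cons_zero, if_pos] using hiu
      · have := Submodule.mem_orthogonal_singleton_iff_inner_right.mp (hf'perp j')
        simp only [Fin.cons_zero, Fin.cons_succ, if_neg (Fin.succ_ne_zero j').symm]
        exact this
      · have := Submodule.mem_orthogonal_singleton_iff_inner_left.mp (hf'perp i')
        simp only [Fin.cons_zero, Fin.cons_succ, if_neg (Fin.succ_ne_zero i')]
        exact this
      · have := orthonormal_iff_ite.mp hf'on i' j'
        simp only [Fin.cons_succ, Fin.succ_inj]
        simpa using this
    · intro i
      refine Fin.cases ?_ ?_ i
      · simpa using huV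
      · intro i'; simpa using (Submodule.mem_inf.mp (hf'V i')).2
    · intro i
      refine Fin.cases ?_ ?_ i
      · exact ⟨μ, by simpa using hTu⟩
      · intro i'; simpa using hf'eig i'


lemma conj_outer {d : ℕ} (M : Matrix (Fin d) (Fin d) ℂ) (x : Fin d → ℂ) :
    M * Matrix.vecMulVec x (star x) * Mᴴ
      = Matrix.vecMulVec (M *ᵥ x) (star (M *ᵥ x)) := by
  rw [Matrix.vecMulVec_eq Unit, Matrix.vecMulVec_eq Unit, star_mulVec, Matrix.replicateCol_mulVec,
    Matrix.replicateRow_vecMul]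
  simp only [Matrix.mul_assoc]

lemma outer_mulVec {d : ℕ} (x y w : Fin d → ℂ) :
    Matrix.vecMulVec x y *ᵥ w = (y ⬝ᵥ w) • x := by
  ext i
  simp only [Matrix.mulVec, dotProduct, Matrix.vecMulVec_apply, Pi.smul_apply,
    smul_eq_mul, Finset.sum_mul]
  exact Finset.sum_congr rfl fun j _ => by ring

/-- For any two unitaries `U₁, U₂`, there exist `d` Hermitian matrices, linearly
independent over `ℝ`, satisfying the correctability constraint
`U₁ A U₁ᴴ = U₂ A U₂ᴴ`. -/
theorem stmt_8 (d : ℕ) (hd : 1 ≤ d)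
    (U₁ U₂ : Matrix (Fin d) (Fin d) ℂ)
    (hU₁ : U₁ ∈ Matrix.unitaryGroup (Fin d) ℂ)
    (hU₂ : U₂ ∈ Matrix.unitaryGroup (Fin d) ℂ) :
    ∃ A : Fin d → Matrix (Fin d) (Fin d) ℂ,
      (∀ k, (A k).IsHermitian) ∧
      LinearIndependent ℝ A ∧
      (∀ k, U₁ * A k * U₁ᴴ = U₂ * A k * U₂ᴴ) := by
  classical
  obtain ⟨hU₁l, hU₁r⟩ := Unitary.mem_iff.mp hU₁
  obtain ⟨hU₂l, hU₂r⟩ := Unitary.mem_iff.mp hU₂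
  rw [Matrix.star_eq_conjTranspose] at hU₁l hU₁r hU₂l hU₂r
  set W : Matrix (Fin d) (Fin d) ℂ := U₁ᴴ * U₂ with hWdef
  have hWH : Wᴴ = U₂ᴴ * U₁ := by
    rw [hWdef, conjTranspose_mul, conjTranspose_conjTranspose]
  have hW1 : Wᴴ * W = 1 := by
    rw [hWH, hWdef, Matrix.mul_assoc, ← Matrix.mul_assoc U₁, hU₁r, Matrix.one_mul, hU₂l]
  have hW2 : W * Wᴴ = 1 := by
    rw [hWH, hWdef, Matrix.mul_assoc, ← Matrix.mul_assoc U₂, hU₂r, Matrix.one_mul, hU₁l]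
  set T : Module.End ℂ (EuclideanSpace ℂ (Fin d)) := Matrix.toEuclideanLin W with hT
  set S : Module.End ℂ (EuclideanSpace ℂ (Fin d)) := Matrix.toEuclideanLin Wᴴ with hS
  have hST : ∀ x, S (T x) = x := by
    intro x
    apply (WithLp.equiv 2 (Fin d → ℂ)).injective
    simp [hS, hT, Matrix.mulVec_mulVec, hW1, Matrix.one_mulVec]
  have hTS : ∀ x, T (S x) = x := by
    intro x
    apply (WithLp.equiv 2 (Fin d → ℂ)).injective
    simp [hS, hT, Matrix.mulVec_mulVec, hW2, Matrix.one_mulVec]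
  have hTT : ∀ x y, ⟪T x, T y⟫ = ⟪x, y⟫ := by
    intro x y
    rw [EuclideanSpace.inner_eq_star_dotProduct, EuclideanSpace.inner_eq_star_dotProduct,
      dotProduct_comm, dotProduct_comm y.ofLp]
    simp only [hT, Matrix.ofLp_toEuclideanLin_apply]
    rw [Matrix.dotProduct_mulVec, star_mulVec, Matrix.vecMul_vecMul, hW1, Matrix.vecMul_one]
  have hrank : finrank ℂ (⊤ : Submodule ℂ (EuclideanSpace ℂ (Fin d))) = d := by
    rw [finrank_top, finrank_euclideanSpace_fin]
  obtain ⟨f, hon, -, heig⟩ :=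
    eigenbasis_aux T S hTT hST hTS d ⊤ hrank (fun v _ => Submodule.mem_top)
  choose μ hμ using heig
  set v : Fin d → (Fin d → ℂ) := fun k => WithLp.equiv 2 (Fin d → ℂ) (f k) with hv
  have horth : ∀ j k, star (v j) ⬝ᵥ v k = if j = k then (1 : ℂ) else 0 := by
    intro j k
    have := orthonormal_iff_ite.mp hon j k
    rw [EuclideanSpace.inner_eq_star_dotProduct, dotProduct_comm] at this
    exact this
  have heigv : ∀ k, W *ᵥ v k = μ k • v k := by
    intro k
    have := congrArg (WithLp.equiv 2 (Fin d → ℂ)) (hμ k)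
    simpa [hv, hT] using this
  have hself : ∀ k, ⟪f k, f k⟫ = 1 := by
    intro k
    have := orthonormal_iff_ite.mp hon k k
    simpa using this
  have hμunit : ∀ k, (starRingEnd ℂ) (μ k) * μ k = 1 := by
    intro k
    have h := hTT (f k) (f k)
    rw [hμ k, inner_smul_left, inner_smul_right, hself, mul_one] at h
    exact h
  set A : Fin d → Matrix (Fin d) (Fin d) ℂ :=
    fun k => Matrix.vecMulVec (v k) (star (v k)) with hA
  have hconj : ∀ k, W * A k * Wᴴ = A k := by
    intro k
    rw [hA]
    simp only
    rw [conj_outer, heigv k]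
    ext i j
    simp only [Matrix.vecMulVec_apply, Pi.star_apply, Pi.smul_apply, smul_eq_mul, star_mul']
    have hst : star (μ k) * μ k = 1 := hμunit k
    linear_combination (v k i * star (v k j)) * hst
  refine ⟨A, ?_, ?_, ?_⟩
  · intro k
    have : (A k)ᴴ = A k := by
      ext i j
      simp only [hA, Matrix.conjTranspose_apply, Matrix.vecMulVec_apply, Pi.star_apply,
        star_mul', star_star]
      ring
    exact this
  · rw [Fintype.linearIndependent_iff]
    intro g hg l
    set L : Matrix (Fin d) (Fin d) ℂ →ₗ[ℝ] ℂ :=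
      { toFun := fun M => star (v l) ⬝ᵥ (M *ᵥ v l),
        map_add' := fun M N => by
          show star (v l) ⬝ᵥ ((M + N) *ᵥ v l) = _
          rw [Matrix.add_mulVec, dotProduct_add],
        map_smul' := fun r M => by
          show star (v l) ⬝ᵥ ((r • M) *ᵥ v l) = _
          rw [Matrix.smul_mulVec, dotProduct_smul]; rfl } with hL
    have hLA : ∀ k, L (A k) = if k = l then 1 else 0 := by
      intro k
      have h1 : A k *ᵥ v l = (if k = l then (1 : ℂ) else 0) • v k := by
        rw [hA]
        simp only
        rw [outer_mulVec, horth]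
      show star (v l) ⬝ᵥ (A k *ᵥ v l) = _
      rw [h1, dotProduct_smul, horth l k]
      by_cases h : k = l <;> simp [h]
    have hkey := congrArg L hg
    rw [map_sum, map_zero] at hkey
    simp only [L.map_smul, hLA, smul_ite, smul_zero, Finset.sum_ite_eq', Finset.mem_univ,
      if_true, Complex.real_smul, mul_one] at hkey
    exact_mod_cast hkey
  · intro k
    have h2 : U₁ * W = U₂ := by
      rw [hWdef, ← Matrix.mul_assoc, hU₁r, Matrix.one_mul]
    have h3 : Wᴴ * U₁ᴴ = U₂ᴴ := by
      rw [hWH, Matrix.mul_assoc, hU₁r, Matrix.mul_one]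
    have h4 : U₂ * A k * U₂ᴴ = U₁ * (W * A k * Wᴴ) * U₁ᴴ := by
      rw [← h3, ← h2]
      simp only [Matrix.mul_assoc]
    rw [h4, hconj]
end

section
/- Let σ₀ = I₂, σ₁ = [[0,1],[1,0]], σ₂ = [[0,−i],[i,0]], σ₃ = [[1,0],[0,−1]]. Let p ∈ [0,1] with p ≠ 1/2, μ ∈ [0,1], p₀ = 1−p, p₁ = p, and define the two-qubit channel on M₄(ℂ): Φ(ρ) = (1−μ)·Σ_{i,j∈{0,1}} p_i p_j (σ_i⊗σ_j) ρ (σ_i⊗σ_j) + μ·Σ_{i∈{0,1}} p_i (σ_i⊗σ_i) ρ (σ_i⊗σ_i). For real numbers a_{ij}, b_{ij} (i∈{0,1}, j∈{2,3}) and c_{ij} (i,j∈{0,1}), set A = Σ_{i∈{0,1},j∈{2,3}} (a_{ij} σ_i⊗σ_j + b_{ij} σ_j⊗σ_i) + Σ_{i,j∈{0,1}} c_{ij} σ_i⊗σ_j and C = (1/(1−2p))·Σ_{i∈{0,1},j∈{2,3}} (a_{ij} σ_i⊗σ_j + b_{ij} σ_j⊗σ_i) + Σ_{i,j∈{0,1}}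 c_{ij} σ_i⊗σ_j. Then for every ρ ∈ M₄(ℂ), Tr(C · Φ(ρ)) = Tr(A · ρ). -/
open Matrix Kronecker

/-- `σlow 0 = σ₀ = I₂`, `σlow 1 = σ₁`. -/
noncomputable def σlow : Fin 2 → Matrix (Fin 2) (Fin 2) ℂ :=
  ![1, !![0, 1; 1, 0]]

/-- `σhigh 0 = σ₂`, `σhigh 1 = σ₃`. -/
noncomputable def σhigh : Fin 2 → Matrix (Fin 2) (Fin 2) ℂ :=
  ![!![0, -Complex.I; Complex.I, 0], !![1, 0; 0, -1]]

noncomputable def εs : Fin 2 → ℂ := ![1, -1]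

lemma conj_low (k i : Fin 2) : σlow k * σlow i * σlow k = σlow i := by
  fin_cases k <;> fin_cases i <;>
    (ext x y; fin_cases x <;> fin_cases y <;>
      simp [σlow, Matrix.mul_apply, Fin.sum_univ_two, Matrix.one_apply])

lemma conj_high (k j : Fin 2) : σlow k * σhigh j * σlow k = εs k • σhigh j := by
  fin_cases k <;> fin_cases j <;>
    (ext x y; fin_cases x <;> fin_cases y <;>
      simp [σlow, σhigh, εs, Matrix.mul_apply, Fin.sum_univ_two, Matrix.one_apply])

lemma cSa (k l i j : Fin 2) :
    (σlow k ⊗ₖ σlow l) * (σlow i ⊗ₖ σhigh j) * (σlow k ⊗ₖ σlow l) =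
      εs l • (σlow i ⊗ₖ σhigh j) := by
  rw [← Matrix.mul_kronecker_mul, ← Matrix.mul_kronecker_mul, conj_low, conj_high,
    Matrix.kronecker_smul]

lemma cSb (k l i j : Fin 2) :
    (σlow k ⊗ₖ σlow l) * (σhigh j ⊗ₖ σlow i) * (σlow k ⊗ₖ σlow l) =
      εs k • (σhigh j ⊗ₖ σlow i) := by
  rw [← Matrix.mul_kronecker_mul, ← Matrix.mul_kronecker_mul, conj_low, conj_high,
    Matrix.smul_kronecker]

lemma cL (k l i j : Fin 2) :
    (σlow k ⊗ₖ σlow l) * (σlow i ⊗ₖ σlow j) * (σlow k ⊗ₖ σlow l) =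
      σlow i ⊗ₖ σlow j := by
  rw [← Matrix.mul_kronecker_mul, ← Matrix.mul_kronecker_mul, conj_low, conj_low]

lemma tr_conj (K C ρ : Matrix (Fin 2 × Fin 2) (Fin 2 × Fin 2) ℂ) :
    (C * (K * ρ * K)).trace = (K * C * K * ρ).trace := by
  calc (C * (K * ρ * K)).trace = ((K * ρ * K) * C).trace := Matrix.trace_mul_comm _ _
    _ = ((K * ρ) * (K * C)).trace := by rw [Matrix.mul_assoc (K * ρ)]
    _ = ((K * C) * (K * ρ)).trace := Matrix.trace_mul_comm _ _
    _ = (K * C * K * ρ).trace := by rw [Matrix.mul_assoc (K * C)]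


/-- Two-qubit bit-flip channel with partial memory `μ` and known flip
probability `p ≠ 1/2`: the 12-real-parameter family of observables `A` has
exactly recoverable expectation values, via the modified observable `C`,
for every `μ` and every input. -/
theorem stmt_13 (p μ : ℝ) (hp : p ∈ Set.Icc (0 : ℝ) 1) (hp2 : p ≠ 1 / 2)
    (hμ : μ ∈ Set.Icc (0 : ℝ) 1)
    (pr : Fin 2 → ℝ) (hpr : pr = ![1 - p, p])
    (Φ : Matrix (Fin 2 × Fin 2) (Fin 2 × Fin 2) ℂ →
         Matrix (Fin 2 × Fin 2) (Fin 2 × Fin 2) ℂ)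
    (hΦ : ∀ ρ, Φ ρ =
      (1 - μ) • (∑ i : Fin 2, ∑ j : Fin 2, (pr i * pr j) •
        ((σlow i ⊗ₖ σlow j) * ρ * (σlow i ⊗ₖ σlow j))) +
      μ • (∑ i : Fin 2, (pr i) •
        ((σlow i ⊗ₖ σlow i) * ρ * (σlow i ⊗ₖ σlow i))))
    (a b c : Fin 2 → Fin 2 → ℝ)
    (A C : Matrix (Fin 2 × Fin 2) (Fin 2 × Fin 2) ℂ)
    (hA : A =
      (∑ i : Fin 2, ∑ j : Fin 2,
        (a i j • (σlow i ⊗ₖ σhigh j) + b i j • (σhigh j ⊗ₖ σlow i))) +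
      ∑ i : Fin 2, ∑ j : Fin 2, c i j • (σlow i ⊗ₖ σlow j))
    (hC : C =
      (1 / (1 - 2 * p)) • (∑ i : Fin 2, ∑ j : Fin 2,
        (a i j • (σlow i ⊗ₖ σhigh j) + b i j • (σhigh j ⊗ₖ σlow i))) +
      ∑ i : Fin 2, ∑ j : Fin 2, c i j • (σlow i ⊗ₖ σlow j)) :
    ∀ ρ : Matrix (Fin 2 × Fin 2) (Fin 2 × Fin 2) ℂ,
      (C * Φ ρ).trace = (A * ρ).trace := by

  have h1 : (1 : ℂ) - 2 * (p : ℂ) ≠ 0 := by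
    intro h
    apply hp2
    have h2 : ((p : ℝ) : ℂ) = (((1 : ℝ)/2 : ℝ) : ℂ) := by push_cast; linear_combination -h / 2
    exact Complex.ofReal_inj.mp h2
  set Sa : Matrix (Fin 2 × Fin 2) (Fin 2 × Fin 2) ℂ :=
    ∑ i : Fin 2, ∑ j : Fin 2, a i j • (σlow i ⊗ₖ σhigh j) with hSa
  set Sb : Matrix (Fin 2 × Fin 2) (Fin 2 × Fin 2) ℂ :=
    ∑ i : Fin 2, ∑ j : Fin 2, b i j • (σhigh j ⊗ₖ σlow i) with hSb
  set L : Matrix (Fin 2 × Fin 2) (Fin 2 × Fin 2) ℂ :=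
    ∑ i : Fin 2, ∑ j : Fin 2, c i j • (σlow i ⊗ₖ σlow j) with hL
  have hsplit : (∑ i : Fin 2, ∑ j : Fin 2,
      (a i j • (σlow i ⊗ₖ σhigh j) + b i j • (σhigh j ⊗ₖ σlow i))) = Sa + Sb := by
    rw [hSa, hSb, ← Finset.sum_add_distrib]
    exact Finset.sum_congr rfl fun i _ => by rw [← Finset.sum_add_distrib]
  have hA' : A = Sa + Sb + L := by rw [hA, hsplit, hL]
  have castsmul : ∀ (r : ℝ) (M : Matrix (Fin 2 × Fin 2) (Fin 2 × Fin 2) ℂ),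
      r • M = (r : ℂ) • M := fun r M => by
    ext i j; simp [Matrix.smul_apply, Complex.real_smul]
  have hC' : C = (1 / (1 - 2 * (p : ℂ))) • (Sa + Sb) + L := by
    rw [hC, hsplit, hL, castsmul]; push_cast; ring_nf
  -- conjugation of the building blocks
  have conjSa : ∀ k l : Fin 2,
      (σlow k ⊗ₖ σlow l) * Sa * (σlow k ⊗ₖ σlow l) = εs l • Sa := by
    intro k l
    rw [hSa]
    simp only [Matrix.mul_sum, Matrix.sum_mul, Matrix.mul_smul, Matrix.smul_mul,
      Finset.smul_sum, cSa]
    exact Finset.sum_congr rfl fun i _ => Finset.sum_congr rfl fun j _ => smul_comm _ _ _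
  have conjSb : ∀ k l : Fin 2,
      (σlow k ⊗ₖ σlow l) * Sb * (σlow k ⊗ₖ σlow l) = εs k • Sb := by
    intro k l
    rw [hSb]
    simp only [Matrix.mul_sum, Matrix.sum_mul, Matrix.mul_smul, Matrix.smul_mul,
      Finset.smul_sum, cSb]
    exact Finset.sum_congr rfl fun i _ => Finset.sum_congr rfl fun j _ => smul_comm _ _ _
  have conjL : ∀ k l : Fin 2,
      (σlow k ⊗ₖ σlow l) * L * (σlow k ⊗ₖ σlow l) = L := by
    intro k l
    rw [hL]
    simp only [Matrix.mul_sum, Matrix.sum_mul, Matrix.mul_smul, Matrix.smul_mul, cL]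
  have conjC : ∀ k l : Fin 2,
      (σlow k ⊗ₖ σlow l) * C * (σlow k ⊗ₖ σlow l) =
        ((1 / (1 - 2 * (p : ℂ))) * εs l) • Sa + ((1 / (1 - 2 * (p : ℂ))) * εs k) • Sb + L := by
    intro k l
    rw [hC']
    simp only [Matrix.mul_add, Matrix.add_mul, Matrix.mul_smul, Matrix.smul_mul, smul_add]
    rw [conjSa, conjSb, conjL, smul_smul, smul_smul]
  have hΦC : Φ C = A := by
    rw [hΦ C, hA']
    simp only [conjC, hpr, Fin.sum_univ_two, εs, Matrix.cons_val_zero, Matrix.cons_val_one,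
      Matrix.head_cons]
    push_cast
    match_scalars <;> field_simp <;> ring_nf <;> simp
  intro ρ
  rw [← hΦC, hΦ C, hΦ ρ]
  simp only [Matrix.mul_add, Matrix.add_mul, Matrix.mul_sum, Matrix.sum_mul,
    Matrix.mul_smul, Matrix.smul_mul, Matrix.trace_add, Matrix.trace_sum,
    Matrix.trace_smul, tr_conj]
end

section
/- Let U₁ = (1/√2)·[[1,−1],[1,1]] and U₂ = [[0,1],[1,0]] in M₂(ℂ). For a, b ∈ ℝ let A = [[a+2b, b],[b, a]] and C = [[a, b],[b, a+2b]]. Then for every p ∈ [0,1] and every ρ ∈ M₂(ℂ), Tr( C · ( (1−p) U₁ ρ U₁ᴴ + p U₂ ρ U₂ᴴ ) ) = Tr(A · ρ). -/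
open Matrix

/-- Qubit two-unitary example: the two-real-parameter family
`A = [[a+2b, b],[b, a]]` has exactly recoverable expectation values by
measuring `C = [[a, b],[b, a+2b]]` on the noisy state, for every unknown `p`. -/
theorem stmt_14 (U₁ U₂ : Matrix (Fin 2) (Fin 2) ℂ)
    (hU₁ : U₁ = (1 / (Real.sqrt 2 : ℂ)) • !![1, -1; 1, 1])
    (hU₂ : U₂ = !![0, 1; 1, 0])
    (a b : ℝ)
    (A C : Matrix (Fin 2) (Fin 2) ℂ)
    (hA : A = !![((a + 2 * b : ℝ) : ℂ), (b : ℂ); (b : ℂ), (a : ℂ)])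
    (hC : C = !![(a : ℂ), (b : ℂ); (b : ℂ), ((a + 2 * b : ℝ) : ℂ)]) :
    ∀ p : ℝ, p ∈ Set.Icc (0 : ℝ) 1 →
      ∀ ρ : Matrix (Fin 2) (Fin 2) ℂ,
        (C * ((1 - p) • (U₁ * ρ * U₁ᴴ) + p • (U₂ * ρ * U₂ᴴ))).trace
          = (A * ρ).trace := by
  intro p _ ρ
  have h2 : ((Real.sqrt 2 : ℂ)) * (Real.sqrt 2 : ℂ) = 2 := by
    norm_cast
    exact_mod_cast Real.mul_self_sqrt (by norm_num : (0:ℝ) ≤ 2)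
  have hne : (Real.sqrt 2 : ℂ) ≠ 0 := by
    intro h
    rw [h, mul_zero] at h2
    norm_num at h2
  subst hU₁ hU₂ hA hC
  simp only [Matrix.trace_fin_two, Matrix.mul_apply, Fin.sum_univ_two,
    Matrix.conjTranspose_apply, Matrix.smul_apply, Matrix.add_apply,
    Matrix.cons_val', Matrix.cons_val_zero, Matrix.cons_val_one, Matrix.head_cons,
    Matrix.head_fin_const, Matrix.empty_val', Matrix.cons_val_fin_one, Matrix.of_apply,
    smul_eq_mul, star_one, star_neg, star_zero, star_mul', RCLike.star_def,
    map_div₀, _root_.map_one, Complex.conj_ofReal, Complex.real_smul, map_neg, map_zero]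
  field_simp
  ring_nf
  rw [show ((Real.sqrt 2 : ℂ))^2 = 2 by rw [sq]; exact h2]
  push_cast
  ring
end

section
/- Let σ₀ = I₂, σ₁ = [[0,1],[1,0]], σ₂ = [[0,−i],[i,0]], σ₃ = [[1,0],[0,−1]]. Let p ∈ [0,1] with p ≠ 1/2, μ ∈ [0,1], x ∈ ℝ with 0 ≤ x, p₀ = 1−p, p₁ = p, and define on M₄(ℂ): Φ(ρ) = (1−μ)·Σ_{i,j∈{0,1}} p_i p_j (σ_i⊗σ_j) ρ (σ_i⊗σ_j) + μ·Σ_{i∈{0,1}} p_i (σ_i⊗σ_i) ρ (σ_i⊗σ_i), B = σ₀⊗σ₂ + σ₀⊗σ₃ + σ₂⊗σ₀ + σ₃⊗σ₀ + σ₂⊗σ₂ + σ₂⊗σ₃ + σ₃⊗σ₂ + σ₃⊗σ₃, C = (1/(1−2p))·(σ₀⊗σ₂ + σ₀⊗σ₃ + σ₂⊗σ₀ + σ₃⊗σ₀) + σ₂⊗σ₂ + σ₂⊗σ₃ + σ₃⊗σ₂ + σ₃⊗σ₃, and ρ_x = (1/4)·( σ₀⊗σ₀ + x·(σ₂⊗σ₀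 + σ₀⊗σ₃) + σ₂⊗σ₃ ). Then Tr(B · ρ_x) − Tr(C · Φ(ρ_x)) = 4p(1−p)(1−μ), and consequently |Tr(B · ρ_x) − Tr(C · Φ(ρ_x))| ≤ |Tr(B · ρ_x) − Tr(B · Φ(ρ_x))|. -/
open Matrix Kronecker

set_option maxHeartbeats 40000000 in
/-- Partial recovery for the two-qubit bit-flip channel with partial memory:
`Tr(B ρ_x) − Tr(C Φ(ρ_x)) = 4p(1−p)(1−μ)`, so the deconvolved deviation is at
most the raw noisy deviation on the states `ρ_x` with `x ≥ 0`. -/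
theorem stmt_17 (p μ x : ℝ) (hp : p ∈ Set.Icc (0 : ℝ) 1) (hp2 : p ≠ 1 / 2)
    (hμ : μ ∈ Set.Icc (0 : ℝ) 1) (hx : 0 ≤ x)
    (pr : Fin 2 → ℝ) (hpr : pr = ![1 - p, p])
    (Φ : Matrix (Fin 2 × Fin 2) (Fin 2 × Fin 2) ℂ →
         Matrix (Fin 2 × Fin 2) (Fin 2 × Fin 2) ℂ)
    (hΦ : ∀ ρ, Φ ρ =
      (1 - μ) • (∑ i : Fin 2, ∑ j : Fin 2, (pr i * pr j) •
        ((σlow i ⊗ₖ σlow j) * ρ * (σlow i ⊗ₖ σlow j))) +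
      μ • (∑ i : Fin 2, (pr i) •
        ((σlow i ⊗ₖ σlow i) * ρ * (σlow i ⊗ₖ σlow i))))
    (B C ρx : Matrix (Fin 2 × Fin 2) (Fin 2 × Fin 2) ℂ)
    (hB : B = σlow 0 ⊗ₖ σhigh 0 + σlow 0 ⊗ₖ σhigh 1 +
              σhigh 0 ⊗ₖ σlow 0 + σhigh 1 ⊗ₖ σlow 0 +
              σhigh 0 ⊗ₖ σhigh 0 + σhigh 0 ⊗ₖ σhigh 1 +
              σhigh 1 ⊗ₖ σhigh 0 + σhigh 1 ⊗ₖ σhigh 1)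
    (hC : C = (1 / (1 - 2 * p)) •
              (σlow 0 ⊗ₖ σhigh 0 + σlow 0 ⊗ₖ σhigh 1 +
               σhigh 0 ⊗ₖ σlow 0 + σhigh 1 ⊗ₖ σlow 0) +
              (σhigh 0 ⊗ₖ σhigh 0 + σhigh 0 ⊗ₖ σhigh 1 +
               σhigh 1 ⊗ₖ σhigh 0 + σhigh 1 ⊗ₖ σhigh 1))
    (hρx : ρx = (1 / 4 : ℝ) •
      (σlow 0 ⊗ₖ σlow 0 +
        x • (σhigh 0 ⊗ₖ σlow 0 + σlow 0 ⊗ₖ σhigh 1) +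
        σhigh 0 ⊗ₖ σhigh 1)) :
    (B * ρx).trace - (C * Φ ρx).trace
        = ((4 * p * (1 - p) * (1 - μ) : ℝ) : ℂ) ∧
      ‖(B * ρx).trace - (C * Φ ρx).trace‖
        ≤ ‖(B * ρx).trace - (B * Φ ρx).trace‖ := by
  have hμ1 := hμ.2
  have hp0 := hp.1
  have hp1 := hp.2
  have h2pR : (1 - 2 * p : ℝ) ≠ 0 := by
    intro h; apply hp2; linarith
  have h2p : ((1 - 2 * p : ℝ) : ℂ) ≠ 0 := Complex.ofReal_ne_zero.2 h2pR
  have h2p' : (1 - (p : ℂ) * 2) ≠ 0 := by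
    intro h
    apply h2p
    push_cast
    linear_combination h
  have hσ : σlow = ![!![1, 0; 0, 1], !![0, 1; 1, 0]] := by
    funext i
    fin_cases i <;> simp [σlow, Matrix.one_fin_two]
  have hΦρ : Φ ρx = (1 / 4 : ℝ) •
      (σlow 0 ⊗ₖ σlow 0 +
        (x * (1 - 2 * p)) • (σhigh 0 ⊗ₖ σlow 0 + σlow 0 ⊗ₖ σhigh 1) +
        ((1 - μ) * (1 - 2 * p) ^ 2 + μ) • (σhigh 0 ⊗ₖ σhigh 1)) := by
    rw [hΦ, hρx, hpr]
    ext ⟨i, j⟩ ⟨k, l⟩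
    fin_cases i <;> fin_cases j <;> fin_cases k <;> fin_cases l <;>
      · simp only [hσ, σhigh, Matrix.trace, Matrix.diag, Matrix.mul_apply, Matrix.add_apply,
      Matrix.smul_apply, Matrix.sum_apply, Matrix.kroneckerMap_apply,
      Fintype.sum_prod_type, Fin.sum_univ_two, Fin.mk_zero, Fin.mk_one,
      Fin.isValue, Matrix.cons_val', Matrix.cons_val_zero, Matrix.cons_val_one,
      Matrix.head_cons, Matrix.head_fin_const, Matrix.empty_val',
      Matrix.cons_val_fin_one, Matrix.of_apply,
      Complex.real_smul, smul_eq_mul]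
        push_cast
        ring
  have trBρ : (B * ρx).trace = ((1 + 2 * x : ℝ) : ℂ) := by
    rw [hB, hρx]
    simp only [hσ, σhigh, Matrix.trace, Matrix.diag, Matrix.mul_apply, Matrix.add_apply,
      Matrix.smul_apply, Matrix.sum_apply, Matrix.kroneckerMap_apply,
      Fintype.sum_prod_type, Fin.sum_univ_two, Fin.mk_zero, Fin.mk_one,
      Fin.isValue, Matrix.cons_val', Matrix.cons_val_zero, Matrix.cons_val_one,
      Matrix.head_cons, Matrix.head_fin_const, Matrix.empty_val',
      Matrix.cons_val_fin_one, Matrix.of_apply,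
      Complex.real_smul, smul_eq_mul]
    push_cast
    ring_nf
    simp only [Complex.I_sq]
    push_cast
    ring_nf
  have trCΦ : (C * Φ ρx).trace
      = ((2 * x + ((1 - μ) * (1 - 2 * p) ^ 2 + μ) : ℝ) : ℂ) := by
    rw [hC, hΦρ]
    simp only [hσ, σhigh, Matrix.trace, Matrix.diag, Matrix.mul_apply, Matrix.add_apply,
      Matrix.smul_apply, Matrix.sum_apply, Matrix.kroneckerMap_apply,
      Fintype.sum_prod_type, Fin.sum_univ_two, Fin.mk_zero, Fin.mk_one,
      Fin.isValue, Matrix.cons_val', Matrix.cons_val_zero, Matrix.cons_val_one,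
      Matrix.head_cons, Matrix.head_fin_const, Matrix.empty_val',
      Matrix.cons_val_fin_one, Matrix.of_apply,
      Complex.real_smul, smul_eq_mul]
    push_cast
    ring_nf
    simp only [Complex.I_sq]
    field_simp
    ring
  have trBΦ : (B * Φ ρx).trace
      = ((2 * x * (1 - 2 * p) + ((1 - μ) * (1 - 2 * p) ^ 2 + μ) : ℝ) : ℂ) := by
    rw [hB, hΦρ]
    simp only [hσ, σhigh, Matrix.trace, Matrix.diag, Matrix.mul_apply, Matrix.add_apply,
      Matrix.smul_apply, Matrix.sum_apply, Matrix.kroneckerMap_apply,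
      Fintype.sum_prod_type, Fin.sum_univ_two, Fin.mk_zero, Fin.mk_one,
      Fin.isValue, Matrix.cons_val', Matrix.cons_val_zero, Matrix.cons_val_one,
      Matrix.head_cons, Matrix.head_fin_const, Matrix.empty_val',
      Matrix.cons_val_fin_one, Matrix.of_apply,
      Complex.real_smul, smul_eq_mul]
    push_cast
    ring_nf
    simp only [Complex.I_sq]
    push_cast
    ring_nf
  have tC : (B * ρx).trace - (C * Φ ρx).trace
      = ((4 * p * (1 - p) * (1 - μ) : ℝ) : ℂ) := by
    rw [trBρ, trCΦ]
    push_cast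
    ring
  refine ⟨tC, ?_⟩
  rw [tC, trBρ, trBΦ]
  rw [← Complex.ofReal_sub, Complex.norm_real, Complex.norm_real, Real.norm_eq_abs, Real.norm_eq_abs]
  have hq : 0 ≤ p * (1 - p) * (1 - μ) :=
    mul_nonneg (mul_nonneg hp0 (by linarith)) (by linarith)
  have hpx : 0 ≤ p * x := mul_nonneg hp0 hx
  have h1 : 0 ≤ 4 * p * (1 - p) * (1 - μ) := by nlinarith [hq]
  have h2 : (1 + 2 * x) - (2 * x * (1 - 2 * p) + ((1 - μ) * (1 - 2 * p) ^ 2 + μ))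
      = 4 * p * (1 - p) * (1 - μ) + 4 * p * x := by ring
  rw [h2, abs_of_nonneg h1, abs_of_nonneg (by nlinarith [hq, hpx] : (0:ℝ) ≤ 4 * p * (1 - p) * (1 - μ) + 4 * p * x)]
  nlinarith [hpx]
end
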